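/- Define v_{p,q}(λ) = λ + 2(q − p)(√(q² + λ) + q) for p ≤ q ∈ ℝ and λ ≥ 0, and define u_t⁻(λ) = e^{−2t}λ + 2e^{−t}(1 − e^{−t})(√(1 + λ) − 1) for t ≥ 0, λ ≥ 0. Then for all real numbers s ≤ t and all λ ≥ 0, u_{t−s}⁻(λ) = e^{2s} · v_{−e^{−s}, −e^{−t}}(e^{−2t}λ). -/

import Mathlib

/-- `v_{p,q}(λ) = λ + 2(q-p)(√(q²+λ) + q)`, the Laplace exponent of the transition
semigroup of the total mass process of the path-valued branching process with
quadratic branching mechanisms. -/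
noncomputable def vpq (p q lam : ℝ) : ℝ :=
  lam + 2 * (q - p) * (Real.sqrt (q ^ 2 + lam) + q)

/-- `u_t⁻(λ) = e^{-2t}λ + 2e^{-t}(1-e^{-t})(√(1+λ) - 1)`. -/
noncomputable def uMinus (t lam : ℝ) : ℝ :=
  Real.exp (-2 * t) * lam + 2 * Real.exp (-t) * (1 - Real.exp (-t)) * (Real.sqrt (1 + lam) - 1)

/-!
The Laplace exponent `v` is homogeneous under the Brownian scaling
`(p, q, λ) ↦ (c p, c q, c² λ)`. Scaling by `c = e^{-t}` reduces `v_{-e^{-s}, -e^{-t}}` to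
`v_{-e^{t-s}, -1}`, which is `u⁻_{t-s}` up to the factor `e^{2(t-s)}`.
-/

open Real

theorem vpq_mul_sq {c : ℝ} (hc : 0 ≤ c) (p q lam : ℝ) :
    vpq (c * p) (c * q) (c ^ 2 * lam) = c ^ 2 * vpq p q lam := by
  have hsqrt : √((c * q) ^ 2 + c ^ 2 * lam) = c * √(q ^ 2 + lam) := by
    rw [show (c * q) ^ 2 + c ^ 2 * lam = c ^ 2 * (q ^ 2 + lam) by ring,
      sqrt_mul (sq_nonneg c), sqrt_sq hc]
  simp only [vpq, hsqrt]
  ring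

theorem uMinus_eq_exp_mul_vpq (r lam : ℝ) :
    uMinus r lam = exp (-2 * r) * vpq (-exp r) (-1) lam := by
  have hexp : exp r = (exp (-r))⁻¹ := by rw [exp_neg, inv_inv]
  have hexp2 : exp (-2 * r) = exp (-r) ^ 2 := by rw [← exp_nat_mul]; ring_nf
  have hpos := (exp_pos (-r)).ne'
  simp only [uMinus, vpq, hexp, hexp2, neg_one_sq]
  field_simp
  ring

theorem stmt17 :
    ∀ s t lam : ℝ, s ≤ t → 0 ≤ lam →
      uMinus (t - s) lam
        = Real.exp (2 * s) * vpq (-Real.exp (-s)) (-Real.exp (-t)) (Real.exp (-2 * t) * lam) := by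
  intro s t lam _ _
  have hp : -exp (-s) = exp (-t) * -exp (t - s) := by rw [mul_neg, ← exp_add]; ring_nf
  have hq : -exp (-t) = exp (-t) * -1 := by ring
  have hlam : exp (-2 * t) = exp (-t) ^ 2 := by rw [← exp_nat_mul]; ring_nf
  have hfactor : exp (2 * s) * exp (-t) ^ 2 = exp (-2 * (t - s)) := by
    rw [← hlam, ← exp_add]; ring_nf
  rw [hp, hq, hlam, vpq_mul_sq (exp_pos _).le, ← mul_assoc, hfactor, uMinus_eq_exp_mul_vpq]
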